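/- Let F, G, H be finite groups, U a subgroup of F × G, and V a subgroup of G × H. Then |Γ(U,V)| = |p₂(U) ∩ p₁(V)| · |k₁(U)| · |k₂(V)|. -/

import Mathlib

open scoped Pointwise

section StarPrelude

variable {F G H I : Type*} [Group F] [Group G] [Group H] [Group I]
variable {A : Type*} [CommGroup A]

/-- The star product of subgroups `U ≤ F × G` and `V ≤ G × H`. -/
def starProd (U : Subgroup (F × G)) (V : Subgroup (G × H)) : Subgroup (F × H) where
  carrier := {p | ∃ g : G, (p.1, g) ∈ U ∧ (g, p.2) ∈ V}
  one_mem' := ⟨1, U.one_mem, V.one_mem⟩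
  mul_mem' := by
    rintro ⟨a, b⟩ ⟨c, d⟩ ⟨g, h1, h2⟩ ⟨g', h1', h2'⟩
    exact ⟨g * g', U.mul_mem h1 h1', V.mul_mem h2 h2'⟩
  inv_mem' := by
    rintro ⟨a, b⟩ ⟨g, h1, h2⟩
    exact ⟨g⁻¹, U.inv_mem h1, V.inv_mem h2⟩

infixl:70 " ⋆ " => starProd

theorem mem_starProd {U : Subgroup (F × G)} {V : Subgroup (G × H)} {p : F × H} :
    p ∈ U ⋆ V ↔ ∃ g : G, (p.1, g) ∈ U ∧ (g, p.2) ∈ V := Iff.rfl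

/-- `Γ(U,V) = {(f,g,h) : (f,g) ∈ U, (g,h) ∈ V}`. -/
def gammaSet (U : Subgroup (F × G)) (V : Subgroup (G × H)) : Set (F × G × H) :=
  {p | (p.1, p.2.1) ∈ U ∧ (p.2.1, p.2.2) ∈ V}

/-- `Γ∩(U,V) = {g ∈ G : (1,g) ∈ U and (g,1) ∈ V}`. -/
def gammaCap (U : Subgroup (F × G)) (V : Subgroup (G × H)) : Set G :=
  {g | ((1 : F), g) ∈ U ∧ (g, (1 : H)) ∈ V}

/-- `p₁(U)`, the image of `U ≤ F × G` in `F`. -/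
def proj1 (U : Subgroup (F × G)) : Subgroup F := U.map (MonoidHom.fst F G)

/-- `p₂(U)`, the image of `U ≤ F × G` in `G`. -/
def proj2 (U : Subgroup (F × G)) : Subgroup G := U.map (MonoidHom.snd F G)

/-- `k₁(U) = {f : (f,1) ∈ U}`. -/
def ker1 (U : Subgroup (F × G)) : Set F := {f | (f, (1 : G)) ∈ U}

/-- `k₂(U) = {g : (1,g) ∈ U}`. -/
def ker2 (U : Subgroup (F × G)) : Set G := {g | ((1 : F), g) ∈ U}

end StarPrelude

/-! `Γ(U,V)` is a subgroup of `F × G × H`, and its projection `(f, g, h) ↦ g` to the middle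
factor is a homomorphism with image `p₂(U) ∩ p₁(V)` and kernel `{(f, 1, h) : f ∈ k₁(U), h ∈ k₂(V)}`.
The formula is then Lagrange's theorem for this kernel, `|Γ(U,V)| = |image| · |kernel|`. -/

section Gamma

variable {F G H : Type*} [Group F] [Group G] [Group H]

def gammaSubgroup (U : Subgroup (F × G)) (V : Subgroup (G × H)) : Subgroup (F × G × H) :=
  U.comap ((MonoidHom.id F).prodMap (MonoidHom.fst G H)) ⊓ V.comap (MonoidHom.snd F (G × H))

def gammaMidProj (U : Subgroup (F × G)) (V : Subgroup (G × H)) : gammaSubgroup U V →* G :=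
  (MonoidHom.fst G H).comp ((MonoidHom.snd F (G × H)).comp (gammaSubgroup U V).subtype)

theorem range_gammaMidProj (U : Subgroup (F × G)) (V : Subgroup (G × H)) :
    (gammaMidProj U V).range = proj2 U ⊓ proj1 V := by
  ext g
  constructor
  · rintro ⟨⟨⟨f, g, h⟩, hU, hV⟩, rfl⟩
    exact ⟨⟨(f, g), hU, rfl⟩, ⟨(g, h), hV, rfl⟩⟩
  · rintro ⟨⟨⟨f, g⟩, hU, rfl⟩, ⟨⟨g', h⟩, hV, hg⟩⟩
    simp only [MonoidHom.coe_snd, MonoidHom.coe_fst] at hg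
    subst hg
    exact ⟨⟨(f, g', h), hU, hV⟩, rfl⟩

def kerGammaMidProjEquiv (U : Subgroup (F × G)) (V : Subgroup (G × H)) :
    (gammaMidProj U V).ker ≃ ker1 U × ker2 V where
  toFun p :=
    have hg : p.1.1.2.1 = 1 := p.2
    ⟨⟨p.1.1.1, show (p.1.1.1, 1) ∈ U from hg ▸ p.1.2.1⟩,
      ⟨p.1.1.2.2, show (1, p.1.1.2.2) ∈ V from hg ▸ p.1.2.2⟩⟩
  invFun q := ⟨⟨(q.1.1, 1, q.2.1), q.1.2, q.2.2⟩, rfl⟩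
  left_inv := by
    rintro ⟨⟨⟨f, g, h⟩, hp⟩, hg : g = 1⟩
    subst hg
    rfl
  right_inv _ := rfl

end Gamma

theorem stmt3_general {F G H : Type*} [Group F] [Group G] [Group H]
    (U : Subgroup (F × G)) (V : Subgroup (G × H)) :
    Nat.card (gammaSet U V) =
      Nat.card ((proj2 U : Set G) ∩ (proj1 V : Set G) : Set G) * Nat.card (ker1 U) *
        Nat.card (ker2 V) :=
  calc Nat.card (gammaSet U V)
    _ = Nat.card (gammaSubgroup U V) := rfl
    _ = Nat.card (gammaMidProj U V).range * Nat.card (gammaMidProj U V).ker := by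
      rw [← Subgroup.index_ker, mul_comm, Subgroup.card_mul_index]
    _ = Nat.card ((proj2 U ⊓ proj1 V : Subgroup G) : Set G) * Nat.card (ker1 U) *
          Nat.card (ker2 V) := by
      rw [Nat.card_congr (kerGammaMidProjEquiv U V), range_gammaMidProj, Nat.card_prod, mul_assoc]
      rfl
    _ = _ := by rw [Subgroup.coe_inf]

/-- For finite groups `F, G, H` and subgroups `U ≤ F × G`, `V ≤ G × H`:
`|Γ(U,V)| = |p₂(U) ∩ p₁(V)| · |k₁(U)| · |k₂(V)|`. -/
theorem stmt3 {F G H : Type*} [Group F] [Group G] [Group H]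
    [Finite F] [Finite G] [Finite H]
    (U : Subgroup (F × G)) (V : Subgroup (G × H)) :
    Nat.card (gammaSet U V) =
      Nat.card ((proj2 U : Set G) ∩ (proj1 V : Set G) : Set G) * Nat.card (ker1 U) *
        Nat.card (ker2 V) :=
  stmt3_general U V
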